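/- arXiv:2504.18660 — 4 statements merged into one kernel-verified Lean document; each statement's English description precedes it below -/
import Mathlib

section
/- Let X be a Hausdorff space which admits a p-maximal continuous selection for 𝓕(X), where p ∈ X is a cut point of X. Then X is first countable at p, i.e. p has a countable neighbourhood base. -/
open Set Topology Filter

universe u v

/-- The hyperspace `𝓕(X)` of all nonempty closed subsets of a topological space `X`. -/
structure NEClosed (X : Type u) [TopologicalSpace X] : Type u where
  carrier : Set X
  nonempty' : carrier.Nonempty
  closed' : IsClosed carrier

namespace NEClosed

variable {X : Type u} [TopologicalSpace X]

/-- The basic Vietoris set `⟨𝒱⟩` determined by a family `𝒱` of subsets of `X`. -/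
def basicSet (𝒱 : Set (Set X)) : Set (NEClosed X) :=
  {S | S.carrier ⊆ ⋃₀ 𝒱 ∧ ∀ V ∈ 𝒱, (S.carrier ∩ V).Nonempty}

/-- The Vietoris topology on `𝓕(X)`, generated by the sets `⟨𝒱⟩` where `𝒱` runs over the
finite families of open subsets of `X`. -/
instance : TopologicalSpace (NEClosed X) :=
  TopologicalSpace.generateFrom
    {t | ∃ 𝒱 : Set (Set X), 𝒱.Finite ∧ (∀ V ∈ 𝒱, IsOpen V) ∧ t = basicSet 𝒱}

/-- The trace of a nonempty closed set `S` on a subspace `A` which it meets, as a nonempty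
closed subset of `A`. -/
def trace (S : NEClosed X) (A : Set X) (h : (S.carrier ∩ A).Nonempty) : NEClosed A where
  carrier := Subtype.val ⁻¹' S.carrier
  nonempty' := ⟨⟨h.choose, h.choose_spec.2⟩, h.choose_spec.1⟩
  closed' := S.closed'.preimage continuous_subtype_val

end NEClosed

/-- `f` is a Vietoris continuous selection for `𝓕(X)`. -/
def IsVSelection {X : Type u} [TopologicalSpace X] (f : NEClosed X → X) : Prop :=
  Continuous f ∧ ∀ S : NEClosed X, f S ∈ S.carrier

/-- `f` is a `p`-maximal selection: `f S = p` whenever `p ∈ S`. -/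
def PMaximal {X : Type u} [TopologicalSpace X] (f : NEClosed X → X) (p : X) : Prop :=
  ∀ S : NEClosed X, p ∈ S.carrier → f S = p

/-- `f` is a `p`-minimal selection: `f S ≠ p` whenever `S ≠ {p}`. -/
def PMinimal {X : Type u} [TopologicalSpace X] (f : NEClosed X → X) (p : X) : Prop :=
  ∀ S : NEClosed X, S.carrier ≠ {p} → f S ≠ p

/-- `H` is clopen modulo the point `p`: `H` is a nonempty closed set, `p ∈ H`, and
`H \ {p}` is open. -/
def ClopenModulo {X : Type u} [TopologicalSpace X] (H : Set X) (p : X) : Prop :=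
  H.Nonempty ∧ IsClosed H ∧ p ∈ H ∧ IsOpen (H \ {p})

/-- `Δ(X)`: the family of all nonempty closed subsets of `X` clopen modulo some point. -/
def DeltaSet (X : Type u) [TopologicalSpace X] : Set (Set X) :=
  {H | ∃ p, ClopenModulo H p}

/-- `Δ_ω(X)`: all `H ∈ Δ(X)` such that `H` is clopen, or `H` is clopen modulo a point `q`
at which `H` (with the subspace topology) has a countable neighbourhood base. -/
def DeltaOmegaSet (X : Type u) [TopologicalSpace X] : Set (Set X) :=
  {H | H ∈ DeltaSet X ∧ (IsClopen H ∨ ∃ q, ∃ hq : q ∈ H,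
    ClopenModulo H q ∧ (𝓝 (⟨q, hq⟩ : H)).IsCountablyGenerated)}

/-- The set `[V]_f = {x : f(Vᶜ ∪ {x}) = x}` for an open set `V`. -/
def bracketSel {X : Type u} [TopologicalSpace X] [T1Space X]
    (f : NEClosed X → X) (V : Set X) (hV : IsOpen V) : Set X :=
  {x | f ⟨Vᶜ ∪ {x}, ⟨x, Or.inr rfl⟩, hV.isClosed_compl.union isClosed_singleton⟩ = x}

/-- The set `⟨V⟩_f = [V]_f ∩ V` for an open set `V`. -/
def angleSel {X : Type u} [TopologicalSpace X] [T1Space X]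
    (f : NEClosed X → X) (V : Set X) (hV : IsOpen V) : Set X :=
  bracketSel f V hV ∩ V

/-- A quasi-ordinal decomposition of `X`: a continuous surjection onto a compact ordinal
space `[0, γ]` all of whose fibers are clopen modulo a point. -/
def IsQuasiOrdDecomp {X : Type u} [TopologicalSpace X] (γ : Ordinal.{u})
    (η : X → Set.Iic γ) : Prop :=
  Continuous η ∧ Function.Surjective η ∧ ∀ α : Set.Iic γ, η ⁻¹' {α} ∈ DeltaSet X

/-- An ordinal decomposition of `X`: a closed quotient map onto a compact ordinal space
`[0, γ]` all of whose fibers are clopen modulo a point. -/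
def IsOrdDecomp {X : Type u} [TopologicalSpace X] (γ : Ordinal.{u})
    (η : X → Set.Iic γ) : Prop :=
  IsQuotientMap η ∧ IsClosedMap η ∧ ∀ α : Set.Iic γ, η ⁻¹' {α} ∈ DeltaSet X

namespace Stmt12Aux

variable {X : Type u} [TopologicalSpace X]

theorem nec_ext {S T : NEClosed X} (h : S.carrier = T.carrier) : S = T := by
  cases S; cases T; simp_all

theorem tendsto_nec {S : ℕ → NEClosed X} {T : NEClosed X}
    (hup : ∀ n, (S n).carrier ⊆ T.carrier)
    (hlo : ∀ V : Set X, IsOpen V → (T.carrier ∩ V).Nonempty →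
      ∀ᶠ n in atTop, ((S n).carrier ∩ V).Nonempty) :
    Tendsto S atTop (𝓝 T) := by
  have h : (𝓝 T : Filter (NEClosed X)) =
      ⨅ s ∈ {s : Set (NEClosed X) | T ∈ s ∧ s ∈
        {t | ∃ 𝒱 : Set (Set X), 𝒱.Finite ∧ (∀ V ∈ 𝒱, IsOpen V) ∧ t = NEClosed.basicSet 𝒱}},
        𝓟 s :=
    TopologicalSpace.nhds_generateFrom
  rw [h]
  refine tendsto_iInf.mpr fun s => tendsto_iInf.mpr fun hs => tendsto_principal.mpr ?_
  obtain ⟨hTs, 𝒱, hfin, hop, rfl⟩ := hs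
  obtain ⟨hTsub, hTmeet⟩ := hTs
  have h2 : ∀ᶠ n in atTop, ∀ V ∈ 𝒱, (((S n).carrier) ∩ V).Nonempty :=
    (Filter.eventually_all_finite hfin).mpr fun V hV => hlo V (hop V hV) (hTmeet V hV)
  filter_upwards [h2] with n hn
  exact ⟨(hup n).trans hTsub, hn⟩

variable [T1Space X]

/-- The map `x ↦ D ∪ {x}` into the hyperspace. -/
def eSet (D : Set X) (hD : IsClosed D) (x : X) : NEClosed X :=
  ⟨D ∪ {x}, ⟨x, Or.inr rfl⟩, hD.union isClosed_singleton⟩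

theorem continuous_eSet (D : Set X) (hD : IsClosed D) : Continuous (eSet D hD) := by
  refine continuous_generateFrom_iff.mpr ?_
  rintro s ⟨𝒱, hfin, hop, rfl⟩
  by_cases hsub : D ⊆ ⋃₀ 𝒱
  · have hpre : eSet D hD ⁻¹' NEClosed.basicSet 𝒱
        = (⋃₀ 𝒱) ∩ ⋂₀ {V | V ∈ 𝒱 ∧ ¬(D ∩ V).Nonempty} := by
      ext x
      constructor
      · rintro ⟨h1, h2⟩
        refine ⟨h1 (Or.inr rfl), ?_⟩
        rintro V ⟨hV𝒱, hDV⟩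
        obtain ⟨y, hy1, hy2⟩ := h2 V hV𝒱
        rcases hy1 with hy1 | hy1
        · exact absurd ⟨y, hy1, hy2⟩ hDV
        · rwa [← hy1]
      · rintro ⟨h1, h2⟩
        constructor
        · rintro y (hy | hy)
          · exact hsub hy
          · rw [hy]; exact h1
        · intro V hV
          by_cases hDV : (D ∩ V).Nonempty
          · obtain ⟨y, hy⟩ := hDV; exact ⟨y, Or.inl hy.1, hy.2⟩
          · exact ⟨x, Or.inr rfl, Set.mem_sInter.mp h2 V ⟨hV, hDV⟩⟩
    rw [hpre]
    refine (isOpen_sUnion fun V hV => hop V hV).inter ?_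
    exact Set.Finite.isOpen_sInter (hfin.subset fun V hV => hV.1) fun V hV => hop V hV.1
  · have hpre : eSet D hD ⁻¹' NEClosed.basicSet 𝒱 = ∅ := by
      ext x
      simp only [Set.mem_preimage, Set.mem_empty_iff_false, iff_false]
      rintro ⟨h1, -⟩
      exact hsub fun y hy => h1 (Or.inl hy)
    rw [hpre]; exact isOpen_empty

/-- The open set on which single points beat the closed set `D`. -/
def Gset (f : NEClosed X → X) (D : Set X) (hD : IsClosed D) : Set X :=
  (fun x => f (eSet D hD x)) ⁻¹' Dᶜ

theorem isOpen_Gset {f : NEClosed X → X} (hf : Continuous f) (D : Set X) (hD : IsClosed D) :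
    IsOpen (Gset f D hD) :=
  (hD.isOpen_compl).preimage (hf.comp (continuous_eSet D hD))

theorem mem_Gset {f : NEClosed X → X} {p : X} (hmax : PMaximal f p) {D : Set X}
    {hD : IsClosed D} (hp : p ∉ D) : p ∈ Gset f D hD := by
  have h : f (eSet D hD p) = p := hmax _ (Or.inr rfl)
  simpa [Gset, h] using hp

theorem Gset_spec {f : NEClosed X → X} (hsel : ∀ S : NEClosed X, f S ∈ S.carrier)
    {D : Set X} {hD : IsClosed D} {x : X} (hx : x ∈ Gset f D hD) :
    f (eSet D hD x) = x := by
  have h := hsel (eSet D hD x)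
  rcases h with h | h
  · exact absurd h hx
  · exact h

end Stmt12Aux

/-- If `𝓕(X)` admits a `p`-maximal continuous selection for a cut point `p` of `X`, then `X`
is first countable at `p`: `p` has a countable neighbourhood base. -/
theorem stmt_12 {X : Type u} [TopologicalSpace X] [T2Space X] (p : X)
    (hcut : ∃ U V : Set X, univ \ {p} = U ∪ V ∧ closure U ∩ closure V = {p})
    (hsel : ∃ f : NEClosed X → X, IsVSelection f ∧ PMaximal f p) :
    ∃ B : ℕ → Set X, (∀ n, B n ∈ 𝓝 p) ∧ ∀ V ∈ 𝓝 p, ∃ n, B n ⊆ V := by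
  classical
  obtain ⟨f, hf, hmax⟩ := hsel
  obtain ⟨U', V', hUV, hclos⟩ := hcut
  have hfc : Continuous f := hf.1
  have hfs : ∀ S : NEClosed X, f S ∈ S.carrier := hf.2
  -- Basic facts about the cut.
  have hpUV : p ∈ closure U' ∩ closure V' := by rw [hclos]; rfl
  have hpU : p ∈ closure U' := hpUV.1
  have hpV : p ∈ closure V' := hpUV.2
  have hpnU : p ∉ U' := by
    intro h
    have h2 : p ∈ univ \ {p} := by rw [hUV]; exact Or.inl h
    exact h2.2 rfl
  have hpnV : p ∉ V' := by
    intro h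
    have h2 : p ∈ univ \ {p} := by rw [hUV]; exact Or.inr h
    exact h2.2 rfl
  have hUne : U'.Nonempty := by
    rcases Set.eq_empty_or_nonempty U' with h | h
    · rw [h, closure_empty] at hpU; exact absurd hpU (Set.notMem_empty p)
    · exact h
  have hVne : V'.Nonempty := by
    rcases Set.eq_empty_or_nonempty V' with h | h
    · rw [h, closure_empty] at hpV; exact absurd hpV (Set.notMem_empty p)
    · exact h
  -- Picking points of `U'` (resp. `V'`) inside the `Gset` of any closed `p`-free set.
  have hpick : ∀ (W : Set X), p ∈ closure W → ∀ (C : Set X) (h1 : IsClosed C), p ∉ C →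
      ∃ x, x ∈ Stmt12Aux.Gset f C h1 ∧ x ∈ W := by
    intro W hW C h1 h2
    have h3 := mem_closure_iff.mp hW (Stmt12Aux.Gset f C h1)
      (Stmt12Aux.isOpen_Gset hfc C h1) (Stmt12Aux.mem_Gset hmax h2)
    obtain ⟨x, hx1, hx2⟩ := h3
    exact ⟨x, hx1, hx2⟩
  ------------------------------------------------------------------
  -- PHASE 1 : construct a sequence in `V'` converging to `p`.
  ------------------------------------------------------------------
  obtain ⟨v₀, hv₀⟩ := hVne
  have hv₀p : p ∉ ({v₀} : Set X) := by
    intro h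
    rw [Set.mem_singleton_iff] at h
    exact hpnV (h ▸ hv₀)
  let CS := {C : Set X // IsClosed C ∧ p ∉ C}
  let bpt : CS → X := fun C => (hpick V' hpV C.1 C.2.1 C.2.2).choose
  have hbpt : ∀ C : CS, bpt C ∈ Stmt12Aux.Gset f C.1 C.2.1 ∧ bpt C ∈ V' :=
    fun C => (hpick V' hpV C.1 C.2.1 C.2.2).choose_spec
  let mid : CS → CS := fun C =>
    ⟨C.1 ∪ {bpt C}, C.2.1.union isClosed_singleton, by
      rintro (h | h)
      · exact C.2.2 h
      · rw [Set.mem_singleton_iff] at h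
        exact hpnV (h ▸ (hbpt C).2)⟩
  let apt : CS → X := fun C => (hpick U' hpU (mid C).1 (mid C).2.1 (mid C).2.2).choose
  have hapt : ∀ C : CS, apt C ∈ Stmt12Aux.Gset f (mid C).1 (mid C).2.1 ∧ apt C ∈ U' :=
    fun C => (hpick U' hpU (mid C).1 (mid C).2.1 (mid C).2.2).choose_spec
  let nxt : CS → CS := fun C =>
    ⟨(mid C).1 ∪ {apt C}, (mid C).2.1.union isClosed_singleton, by
      rintro (h | h)
      · exact (mid C).2.2 h
      · rw [Set.mem_singleton_iff] at h
        exact hpnU (h ▸ (hapt C).2)⟩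
  let P0 : CS := ⟨{v₀}, isClosed_singleton, hv₀p⟩
  let Pk : ℕ → CS := fun n => Nat.rec P0 (fun _ C => nxt C) n
  let Ts : ℕ → Set X := fun n => (Pk n).1
  let bs : ℕ → X := fun n => bpt (Pk n)
  let as : ℕ → X := fun n => apt (Pk n)
  let Us : ℕ → Set X := fun n => Ts n ∪ {bs n}
  have hTclosed : ∀ n, IsClosed (Ts n) := fun n => (Pk n).2.1
  have hUclosed : ∀ n, IsClosed (Us n) := fun n => (hTclosed n).union isClosed_singleton
  have hTsucc : ∀ n, Ts (n + 1) = Us n ∪ {as n} := fun n => rfl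
  have hTmono : ∀ n, Ts n ⊆ Ts (n + 1) := fun n x hx => Or.inl (Or.inl hx)
  have hTle : ∀ m n, m ≤ n → Ts m ⊆ Ts n := by
    intro m n h
    induction n, h using Nat.le_induction with
    | base => exact subset_rfl
    | succ n hmn ih => exact ih.trans (hTmono n)
  have hbsV : ∀ n, bs n ∈ V' := fun n => (hbpt (Pk n)).2
  have hasU : ∀ n, as n ∈ U' := fun n => (hapt (Pk n)).2
  have hfU : ∀ n, f (Stmt12Aux.eSet (Ts n) (hTclosed n) (bs n)) = bs n :=
    fun n => Stmt12Aux.Gset_spec hfs (hbpt (Pk n)).1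
  have hfT : ∀ n, f (Stmt12Aux.eSet (Us n) (hUclosed n) (as n)) = as n :=
    fun n => Stmt12Aux.Gset_spec hfs (hapt (Pk n)).1
  -- the Vietoris limit of the increasing family
  have hTωne : (closure (⋃ n, Ts n)).Nonempty :=
    ⟨v₀, subset_closure (Set.mem_iUnion.mpr ⟨0, rfl⟩)⟩
  let necTω : NEClosed X := ⟨closure (⋃ n, Ts n), hTωne, isClosed_closure⟩
  have hsubΩ : ∀ n, Ts n ⊆ necTω.carrier :=
    fun n => (Set.subset_iUnion Ts n).trans subset_closure
  have hlow : ∀ V₀ : Set X, IsOpen V₀ → (necTω.carrier ∩ V₀).Nonempty →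
      ∃ m, ∃ q, q ∈ Ts m ∧ q ∈ V₀ := by
    rintro V₀ hV₀ ⟨y, hy1, hy2⟩
    have h3 : (V₀ ∩ ⋃ n, Ts n).Nonempty := mem_closure_iff.mp hy1 V₀ hV₀ hy2
    obtain ⟨q, hq1, hq2⟩ := h3
    obtain ⟨m, hm⟩ := Set.mem_iUnion.mp hq2
    exact ⟨m, q, hm, hq1⟩
  have htendU : Tendsto (fun n => Stmt12Aux.eSet (Ts n) (hTclosed n) (bs n)) atTop (𝓝 necTω) := by
    apply Stmt12Aux.tendsto_nec
    · intro n y hy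
      rcases hy with hy | hy
      · exact hsubΩ n hy
      · exact hsubΩ (n + 1) (Or.inl (Or.inr hy))
    · intro V₀ hV₀ hne
      obtain ⟨m, q, hq1, hq2⟩ := hlow V₀ hV₀ hne
      exact Filter.eventually_atTop.mpr ⟨m, fun n hn => ⟨q, Or.inl (hTle m n hn hq1), hq2⟩⟩
  have htendT : Tendsto (fun n => Stmt12Aux.eSet (Us n) (hUclosed n) (as n)) atTop (𝓝 necTω) := by
    apply Stmt12Aux.tendsto_nec
    · intro n y hy
      have h4 : y ∈ Ts (n + 1) := hy
      exact hsubΩ (n + 1) h4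
    · intro V₀ hV₀ hne
      obtain ⟨m, q, hq1, hq2⟩ := hlow V₀ hV₀ hne
      exact Filter.eventually_atTop.mpr
        ⟨m, fun n hn => ⟨q, Or.inl (Or.inl (hTle m n hn hq1)), hq2⟩⟩
  have hbtend : Tendsto bs atTop (𝓝 (f necTω)) := by
    have h5 := (hfc.tendsto necTω).comp htendU
    have h6 : (fun n => f (Stmt12Aux.eSet (Ts n) (hTclosed n) (bs n))) = bs := funext hfU
    rwa [Function.comp_def, h6] at h5
  have hatend : Tendsto as atTop (𝓝 (f necTω)) := by
    have h5 := (hfc.tendsto necTω).comp htendT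
    have h6 : (fun n => f (Stmt12Aux.eSet (Us n) (hUclosed n) (as n))) = as := funext hfT
    rwa [Function.comp_def, h6] at h5
  have hw : f necTω = p := by
    have h7 : f necTω ∈ closure U' ∩ closure V' :=
      ⟨mem_closure_of_tendsto hatend (Filter.Eventually.of_forall hasU),
       mem_closure_of_tendsto hbtend (Filter.Eventually.of_forall hbsV)⟩
    rw [hclos] at h7
    exact h7
  rw [hw] at hbtend
  ------------------------------------------------------------------
  -- PHASE 2 : a countable family of open nbhds of `p` with intersection `{p}`.
  ------------------------------------------------------------------
  let Dn : ℕ → Set X := fun n => bs '' Set.Iic n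
  have hDcl : ∀ n, IsClosed (Dn n) := fun n => ((Set.finite_Iic n).image bs).isClosed
  have hDp : ∀ n, p ∉ Dn n := by
    rintro n ⟨m, -, hm⟩
    exact hpnV (hm ▸ hbsV m)
  let Gn : ℕ → Set X := fun n => ⋂ m ∈ Finset.range (n + 1), Stmt12Aux.Gset f (Dn m) (hDcl m)
  have hGopen : ∀ n, IsOpen (Gn n) :=
    fun n => isOpen_biInter_finset fun m _ => Stmt12Aux.isOpen_Gset hfc _ _
  have hGp : ∀ n, p ∈ Gn n :=
    fun n => Set.mem_iInter₂.mpr fun m _ => Stmt12Aux.mem_Gset hmax (hDp m)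
  have hGanti : ∀ m n, m ≤ n → Gn n ⊆ Gn m := by
    intro m n h x hx
    refine Set.mem_iInter₂.mpr fun k hk => Set.mem_iInter₂.mp hx k ?_
    rw [Finset.mem_range] at hk ⊢
    omega
  have hK : IsClosed (insert p (Set.range bs)) := hbtend.isCompact_insert_range.isClosed
  have hGsingle : ∀ x, (∀ n, x ∈ Gn n) → x = p := by
    intro x hx
    have hxG : ∀ n, x ∈ Stmt12Aux.Gset f (Dn n) (hDcl n) :=
      fun n => Set.mem_iInter₂.mp (hx n) n (Finset.self_mem_range_succ n)
    have hfx : ∀ n, f (Stmt12Aux.eSet (Dn n) (hDcl n) x) = x :=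
      fun n => Stmt12Aux.Gset_spec hfs (hxG n)
    let necL : NEClosed X := ⟨insert p (Set.range bs) ∪ {x},
      ⟨p, Or.inl (Set.mem_insert _ _)⟩, hK.union isClosed_singleton⟩
    have htL : Tendsto (fun n => Stmt12Aux.eSet (Dn n) (hDcl n) x) atTop (𝓝 necL) := by
      apply Stmt12Aux.tendsto_nec
      · rintro n y (⟨m, -, rfl⟩ | hy)
        · exact Or.inl (Set.mem_insert_of_mem _ ⟨m, rfl⟩)
        · exact Or.inr hy
      · rintro V₀ hV₀o ⟨y, hy1, hy2⟩
        rcases hy1 with hy1 | hy1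
        · rcases hy1 with rfl | ⟨m, rfl⟩
          · have h8 : ∀ᶠ n in atTop, bs n ∈ V₀ := hbtend.eventually_mem (hV₀o.mem_nhds hy2)
            filter_upwards [h8] with n hn
            exact ⟨bs n, Or.inl ⟨n, Set.mem_Iic.mpr le_rfl, rfl⟩, hn⟩
          · exact Filter.eventually_atTop.mpr
              ⟨m, fun n hn => ⟨bs m, Or.inl ⟨m, Set.mem_Iic.mpr hn, rfl⟩, hy2⟩⟩
        · rw [Set.mem_singleton_iff] at hy1
          subst hy1
          exact Filter.Eventually.of_forall fun n => ⟨y, Or.inr rfl, hy2⟩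
    have h9 : Tendsto (fun n => f (Stmt12Aux.eSet (Dn n) (hDcl n) x)) atTop (𝓝 (f necL)) :=
      (hfc.tendsto necL).comp htL
    have h10 : f necL = p := hmax _ (Or.inl (Set.mem_insert _ _))
    rw [h10] at h9
    have h11 : Tendsto (fun _ : ℕ => x) atTop (𝓝 p) := by
      have h12 : (fun n => f (Stmt12Aux.eSet (Dn n) (hDcl n) x)) = fun _ : ℕ => x := funext hfx
      rwa [h12] at h9
    exact (tendsto_nhds_unique h11 tendsto_const_nhds).symm
  ------------------------------------------------------------------
  -- PHASE 3 : the countable base.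
  ------------------------------------------------------------------
  obtain ⟨u₀, hu₀⟩ := hUne
  have hu₀p : u₀ ≠ p := fun h => hpnU (h ▸ hu₀)
  have hexN : ∃ N, u₀ ∉ Gn N := by
    by_contra h
    push_neg at h
    exact hu₀p (hGsingle u₀ h)
  obtain ⟨N, hNu⟩ := hexN
  let Bn : ℕ → Set X := fun n => Stmt12Aux.Gset f (Gn (N + n))ᶜ (hGopen (N + n)).isClosed_compl
  have hBopen : ∀ n, IsOpen (Bn n) := fun n => Stmt12Aux.isOpen_Gset hfc _ _
  have hBp : ∀ n, p ∈ Bn n := fun n => Stmt12Aux.mem_Gset hmax (fun h => h (hGp (N + n)))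
  have hbase : ∀ W : Set X, IsOpen W → p ∈ W → ∃ n, Bn n ⊆ W := by
    intro W hWo hpW
    by_contra hcon
    push_neg at hcon
    choose xs hxs1 hxs2 using fun n => Set.not_subset.mp (hcon n)
    have hfS : ∀ n, f (Stmt12Aux.eSet (Gn (N + n))ᶜ (hGopen (N + n)).isClosed_compl (xs n))
        = xs n := fun n => Stmt12Aux.Gset_spec hfs (hxs1 n)
    let necX : NEClosed X := ⟨Set.univ, ⟨p, trivial⟩, isClosed_univ⟩
    have htS : Tendsto
        (fun n => Stmt12Aux.eSet (Gn (N + n))ᶜ (hGopen (N + n)).isClosed_compl (xs n))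
        atTop (𝓝 necX) := by
      apply Stmt12Aux.tendsto_nec
      · intro n y _
        trivial
      · rintro V₀ hV₀o ⟨y, -, hy2⟩
        by_cases hyex : ∃ q ∈ V₀, q ≠ p
        · obtain ⟨q, hq1, hq2⟩ := hyex
          have hM : ∃ M, q ∉ Gn M := by
            by_contra h
            push_neg at h
            exact hq2 (hGsingle q h)
          obtain ⟨M, hM⟩ := hM
          refine Filter.eventually_atTop.mpr ⟨M, fun n hn => ⟨q, Or.inl ?_, hq1⟩⟩
          intro hq
          exact hM (hGanti M (N + n) (by omega) hq)
        · push_neg at hyex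
          exfalso
          have hyp : y = p := hyex y hy2
          subst hyp
          have hV₀sub : V₀ = {y} := by
            apply subset_antisymm
            · intro q hq
              exact hyex q hq
            · intro q hq
              rw [Set.mem_singleton_iff] at hq
              exact hq ▸ hy2
          have hop : IsOpen ({y} : Set X) := hV₀sub ▸ hV₀o
          have h13 : (({y} : Set X) ∩ U').Nonempty := mem_closure_iff.mp hpU {y} hop rfl
          obtain ⟨q, hq1, hq2⟩ := h13
          rw [Set.mem_singleton_iff] at hq1
          exact hpnU (hq1 ▸ hq2)
    have h14 : Tendsto
        (fun n => f (Stmt12Aux.eSet (Gn (N + n))ᶜ (hGopen (N + n)).isClosed_compl (xs n)))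
        atTop (𝓝 (f necX)) := (hfc.tendsto necX).comp htS
    have h15 : f necX = p := hmax _ trivial
    rw [h15] at h14
    have h16 : Tendsto xs atTop (𝓝 p) := by
      have h17 : (fun n => f (Stmt12Aux.eSet (Gn (N + n))ᶜ (hGopen (N + n)).isClosed_compl
          (xs n))) = xs := funext hfS
      rwa [h17] at h14
    obtain ⟨n, hn⟩ := (h16.eventually_mem (hWo.mem_nhds hpW)).exists
    exact hxs2 n hn
  refine ⟨Bn, fun n => (hBopen n).mem_nhds (hBp n), ?_⟩
  intro V₀ hV₀
  obtain ⟨W, hWsub, hWo, hpW⟩ := mem_nhds_iff.mp hV₀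
  obtain ⟨n, hn⟩ := hbase W hWo hpW
  exact ⟨n, hn.trans hWsub⟩
end

section
/- Let λ be a limit ordinal, f a continuous selection for 𝓕(X), and U_α ⊆ X, α < λ, open sets such that cl(U_{α+1}) ⊊ ⟨U_α⟩_f ⊆ U_β for every β ≤ α < λ. Put H_λ = ⋂_{α<λ} U_α and F_λ = cl(X \ H_λ). Then H_λ = [X \ F_λ]_f, the family {U_α : α < λ} forms a local base at the set H_λ (every open set containing H_λ contains some U_α), and both H_λ and F_λ are clopen modulo the point f(F_λ). -/
/-!
Put `V α = U (α + 1)`, a decreasing family of open sets with `H = ⋂ α, V α`. In the Vietoris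
topology the closed sets `(V α)ᶜ ∪ {x}` converge to `F ∪ {x}` for a fixed `x ∈ H`, and
`(V α)ᶜ ∪ {x α}` converge to `F` whenever `x α ∉ H`. Since `f ((V α)ᶜ ∪ {x}) = x` for
`x ∈ ⟨V α⟩_f`, continuity of `f` gives `f (F ∪ {x}) = x` for every `x ∈ H`, and shows that points
of `⟨V α⟩_f \ H` converge to `p = f F`; the latter forces `p ∈ H` and makes the `U α` a local
base at `H`. Finally every `x ∈ H ∩ F` satisfies `x = f (F ∪ {x}) = f F = p`, so the frontier of
the closed set `H` is `{p}`, and then `H \ {p} = Fᶜ` and `F \ {p} = Hᶜ` are open.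
-/

open Set Topology Filter

universe u v

namespace NEClosed

variable {X : Type u} [TopologicalSpace X]

theorem ext {S T : NEClosed X} (h : S.carrier = T.carrier) : S = T := by
  cases S; cases T; cases h; rfl

theorem tendsto_nhds_of_subset_of_eventually_meets {ι : Type*} {l : Filter ι}
    {S : ι → NEClosed X} {K : NEClosed X} (hsub : ∀ᶠ i in l, (S i).carrier ⊆ K.carrier)
    (hmeets : ∀ W, IsOpen W → (K.carrier ∩ W).Nonempty →
      ∀ᶠ i in l, ((S i).carrier ∩ W).Nonempty) :
    Tendsto S l (𝓝 K) := by
  refine TopologicalSpace.tendsto_nhds_generateFrom_iff.mpr ?_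
  rintro s ⟨𝒱, h𝒱, h𝒱o, rfl⟩ hK
  have hmeet : ∀ᶠ i in l, ∀ W ∈ 𝒱, ((S i).carrier ∩ W).Nonempty :=
    (eventually_all_finite h𝒱).mpr fun W hW => hmeets W (h𝒱o W hW) (hK.2 W hW)
  filter_upwards [hsub, hmeet] with i hi hiW
  exact ⟨hi.trans hK.1, hiW⟩

variable [T1Space X]

def unionSingleton (C : Set X) (hC : IsClosed C) (x : X) : NEClosed X :=
  ⟨C ∪ {x}, ⟨x, Or.inr rfl⟩, hC.union isClosed_singleton⟩

theorem unionSingleton_of_mem {C : Set X} (hC : IsClosed C) (hne : C.Nonempty) {x : X}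
    (hx : x ∈ C) : unionSingleton C hC x = ⟨C, hne, hC⟩ :=
  ext (union_eq_self_of_subset_right (singleton_subset_iff.mpr hx))

theorem unionSingleton_compl_compl {C : Set X} (hC : IsClosed C) (hC' : IsClosed Cᶜᶜ) (x : X) :
    unionSingleton Cᶜᶜ hC' x = unionSingleton C hC x :=
  ext (show Cᶜᶜ ∪ {x} = C ∪ {x} by rw [compl_compl])

theorem tendsto_unionSingleton_compl {ι : Type*} [Preorder ι] {V : ι → Set X}
    (hVo : ∀ i, IsOpen (V i)) (hV : Antitone V) (x : ι → X) (K : NEClosed X)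
    (hsub : ∀ i, (V i)ᶜ ∪ {x i} ⊆ K.carrier)
    (hK : ∀ y ∈ K.carrier, y ∈ closure (⋂ i, V i)ᶜ ∨ ∀ i, y = x i) :
    Tendsto (fun i => unionSingleton (V i)ᶜ (hVo i).isClosed_compl (x i)) atTop (𝓝 K) := by
  refine tendsto_nhds_of_subset_of_eventually_meets (.of_forall hsub) ?_
  rintro W hW ⟨y, hyK, hyW⟩
  rcases hK y hyK with hy | hy
  · obtain ⟨z, hzW, hz⟩ := mem_closure_iff.mp hy W hW hyW
    obtain ⟨i₀, hi₀⟩ : ∃ i, z ∉ V i := by simpa using hz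
    filter_upwards [eventually_ge_atTop i₀] with i hi
    exact ⟨z, Or.inl fun hzV => hi₀ (hV hi hzV), hzW⟩
  · exact .of_forall fun i => ⟨y, Or.inr (hy i), hyW⟩

end NEClosed

open NEClosed

theorem IsClosed.clopenModulo_of_frontier_eq_singleton {X : Type u} [TopologicalSpace X]
    {H : Set X} {p : X} (hH : IsClosed H) (hp : frontier H = {p}) :
    ClopenModulo H p ∧ ClopenModulo (closure Hᶜ) p := by
  rw [frontier_eq_closure_inter_closure, hH.closure_eq] at hp
  obtain ⟨hpH, hpF⟩ : p ∈ H ∩ closure Hᶜ := hp.symm ▸ mem_singleton p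
  have hHp : H \ {p} = (closure Hᶜ)ᶜ := by
    ext x
    refine ⟨fun ⟨hxH, hxp⟩ hxF => hxp (hp ▸ ⟨hxH, hxF⟩), fun hxF => ⟨?_, ?_⟩⟩
    · exact not_not.mp fun hxH => hxF (subset_closure hxH)
    · rintro rfl; exact hxF hpF
  have hFp : closure Hᶜ \ {p} = Hᶜ := by
    ext x
    refine ⟨fun ⟨hxF, hxp⟩ hxH => hxp (hp ▸ ⟨hxH, hxF⟩), fun hxH => ⟨subset_closure hxH, ?_⟩⟩
    rintro rfl; exact hxH hpH
  refine ⟨⟨⟨p, hpH⟩, hH, hpH, ?_⟩, ⟨⟨p, hpF⟩, isClosed_closure, hpF, ?_⟩⟩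
  · rw [hHp]; exact isClosed_closure.isOpen_compl
  · rw [hFp]; exact hH.isOpen_compl

theorem iInter_closure_eq_of_forall_exists_closure_subset {X : Type u} [TopologicalSpace X]
    {ι : Sort*} {V : ι → Set X} (h : ∀ i, ∃ j, closure (V j) ⊆ V i) :
    ⋂ i, closure (V i) = ⋂ i, V i :=
  Subset.antisymm (fun _ hx => mem_iInter.mpr fun i => (h i).choose_spec (mem_iInter.mp hx _))
    (iInter_mono fun _ => subset_closure)

section Selection

variable {X : Type u} [TopologicalSpace X] [T1Space X] {f : NEClosed X → X}

theorem angleSel_subset (V : Set X) (hV : IsOpen V) : angleSel f V hV ⊆ V :=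
  inter_subset_right

theorem bracketSel_compl {C : Set X} (hC : IsClosed C) (hC' : IsOpen Cᶜ) :
    bracketSel f Cᶜ hC' = {x | f (unionSingleton C hC x) = x} := by
  ext x
  exact iff_of_eq (congrArg (f · = x) (unionSingleton_compl_compl hC hC'.isClosed_compl x))

theorem eq_bracketSel_compl_closure_compl {H : Set X} (hne : (closure Hᶜ).Nonempty)
    (hfix : ∀ x ∈ H, f (unionSingleton (closure Hᶜ) isClosed_closure x) = x)
    (hpH : f ⟨closure Hᶜ, hne, isClosed_closure⟩ ∈ H) :
    H = bracketSel f (closure Hᶜ)ᶜ isClosed_closure.isOpen_compl := by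
  rw [bracketSel_compl isClosed_closure]
  refine Subset.antisymm hfix fun x hx => ?_
  by_cases hxF : x ∈ closure Hᶜ
  · have hx : f (unionSingleton _ isClosed_closure x) = x := hx
    rw [unionSingleton_of_mem _ hne hxF] at hx
    exact hx ▸ hpH
  · exact not_not.mp fun hxH => hxF (subset_closure hxH)

theorem frontier_eq_singleton_of_selection (hf : IsVSelection f) {H : Set X} (hH : IsClosed H)
    (hne : (closure Hᶜ).Nonempty)
    (hfix : ∀ x ∈ H, f (unionSingleton (closure Hᶜ) isClosed_closure x) = x)
    (hpH : f ⟨closure Hᶜ, hne, isClosed_closure⟩ ∈ H) :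
    frontier H = {f ⟨closure Hᶜ, hne, isClosed_closure⟩} := by
  rw [frontier_eq_closure_inter_closure, hH.closure_eq]
  refine Subset.antisymm (fun x ⟨hxH, hxF⟩ => ?_)
    (singleton_subset_iff.mpr ⟨hpH, hf.2 ⟨_, hne, isClosed_closure⟩⟩)
  rw [mem_singleton_iff, ← hfix x hxH, unionSingleton_of_mem _ hne hxF]

theorem exists_mem_angleSel_notMem_iInter {ι : Sort*} {V : ι → Set X} (hVo : ∀ i, IsOpen (V i))
    (hstrict : ∀ i, ∃ j, closure (V j) ⊂ angleSel f (V i) (hVo i)) (i : ι) :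
    ∃ w ∈ angleSel f (V i) (hVo i), w ∉ ⋂ i, V i := by
  obtain ⟨j, hj⟩ := hstrict i
  obtain ⟨w, hw, hwj⟩ := exists_of_ssubset hj
  exact ⟨w, hw, fun hwH => hwj (subset_closure (mem_iInter.mp hwH j))⟩

theorem iInter_closure_eq_of_ssubset_angleSel {ι : Sort*} {V : ι → Set X} (hVo : ∀ i, IsOpen (V i))
    (hstrict : ∀ i, ∃ j, closure (V j) ⊂ angleSel f (V i) (hVo i)) :
    ⋂ i, closure (V i) = ⋂ i, V i :=
  iInter_closure_eq_of_forall_exists_closure_subset fun i =>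
    let ⟨j, hj⟩ := hstrict i
    ⟨j, hj.subset.trans (angleSel_subset _ _)⟩

end Selection

section ShrinkingNet

variable {X : Type u} [TopologicalSpace X] [T2Space X] {ι : Type*} [Preorder ι]
  {f : NEClosed X → X} {V : ι → Set X}

theorem IsVSelection.apply_unionSingleton_eq_of_mem_iInter [IsDirectedOrder ι] [Nonempty ι]
    (hf : IsVSelection f) (hVo : ∀ i, IsOpen (V i)) (hV : Antitone V)
    (hang : ∀ i, ∃ j, V j ⊆ angleSel f (V i) (hVo i))
    {x : X} (hx : x ∈ ⋂ i, V i) :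
    f (unionSingleton (closure (⋂ i, V i)ᶜ) isClosed_closure x) = x := by
  have hfix : ∀ i, f (unionSingleton (V i)ᶜ (hVo i).isClosed_compl x) = x := fun i =>
    let ⟨j, hj⟩ := hang i
    (hj (mem_iInter.mp hx j)).1
  have hlim := tendsto_unionSingleton_compl hVo hV (fun _ => x)
    (unionSingleton _ isClosed_closure x)
    (fun i => union_subset_union_left _
      ((compl_subset_compl.mpr (iInter_subset V i)).trans subset_closure))
    (fun _ hy => hy.imp id fun hy _ => hy)
  exact tendsto_nhds_unique (((hf.1.tendsto _).comp hlim).congr hfix) tendsto_const_nhds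

theorem IsVSelection.tendsto_of_mem_angleSel (hf : IsVSelection f) (hVo : ∀ i, IsOpen (V i))
    (hV : Antitone V) (hne : (closure (⋂ i, V i)ᶜ).Nonempty) {u : ι → X}
    (hu : ∀ i, u i ∈ angleSel f (V i) (hVo i)) (huH : ∀ i, u i ∉ ⋂ i, V i) :
    Tendsto u atTop (𝓝 (f ⟨closure (⋂ i, V i)ᶜ, hne, isClosed_closure⟩)) := by
  have hlim := tendsto_unionSingleton_compl hVo hV u ⟨_, hne, isClosed_closure⟩
    (fun i => union_subset ((compl_subset_compl.mpr (iInter_subset V i)).trans subset_closure)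
      (singleton_subset_iff.mpr (subset_closure (huH i))))
    (fun _ hy => Or.inl hy)
  exact ((hf.1.tendsto _).comp hlim).congr fun i => (hu i).1

/-- The point `f(F)` is a limit of points `w i ∈ ⟨V i⟩ \ H`, and these eventually lie in
each `V i`. -/
theorem IsVSelection.apply_closure_compl_iInter_mem_iInter [IsDirectedOrder ι] [Nonempty ι]
    (hf : IsVSelection f) (hVo : ∀ i, IsOpen (V i)) (hV : Antitone V)
    (hstrict : ∀ i, ∃ j, closure (V j) ⊂ angleSel f (V i) (hVo i))
    (hne : (closure (⋂ i, V i)ᶜ).Nonempty) :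
    f ⟨closure (⋂ i, V i)ᶜ, hne, isClosed_closure⟩ ∈ ⋂ i, V i := by
  choose w hw hwH using exists_mem_angleSel_notMem_iInter hVo hstrict
  have hlim := hf.tendsto_of_mem_angleSel hVo hV hne hw hwH
  refine (iInter_closure_eq_of_ssubset_angleSel hVo hstrict).subset
    (mem_iInter.mpr fun i => isClosed_closure.mem_of_tendsto hlim ?_)
  filter_upwards [eventually_ge_atTop i] with k hk
  exact subset_closure (hV hk (angleSel_subset _ _ (hw k)))

/-- Otherwise points `u i ∈ ⟨V i⟩ \ W` would converge to `f(F) ∈ H ⊆ W`. -/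
theorem IsVSelection.exists_subset_of_iInter_subset [IsDirectedOrder ι] [Nonempty ι]
    (hf : IsVSelection f) (hVo : ∀ i, IsOpen (V i)) (hV : Antitone V)
    (hstrict : ∀ i, ∃ j, closure (V j) ⊂ angleSel f (V i) (hVo i))
    {W : Set X} (hW : IsOpen W) (hHW : ⋂ i, V i ⊆ W) : ∃ i, V i ⊆ W := by
  by_contra! hVW
  have hu : ∀ i, ∃ u ∈ angleSel f (V i) (hVo i), u ∉ W := fun i => by
    obtain ⟨j, hj⟩ := hstrict i
    obtain ⟨u, hu, huW⟩ := not_subset.mp (hVW j)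
    exact ⟨u, hj.subset (subset_closure hu), huW⟩
  choose u hu huW using hu
  have huH : ∀ i, u i ∉ ⋂ i, V i := fun i h => huW i (hHW h)
  have hne : (closure (⋂ i, V i)ᶜ).Nonempty := ⟨u (Classical.arbitrary ι), subset_closure (huH _)⟩
  have hpW := hHW (hf.apply_closure_compl_iInter_mem_iInter hVo hV hstrict hne)
  obtain ⟨i, hi⟩ := ((hf.tendsto_of_mem_angleSel hVo hV hne hu huH).eventually
    (hW.mem_nhds hpW)).exists
  exact huW i hi

theorem IsVSelection.iInter_eq_bracketSel_and_clopenModulo [IsDirectedOrder ι] [Nonempty ι]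
    (hf : IsVSelection f) (hVo : ∀ i, IsOpen (V i)) (hV : Antitone V)
    (hstrict : ∀ i, ∃ j, closure (V j) ⊂ angleSel f (V i) (hVo i)) :
    let H : Set X := ⋂ i, V i
    let F : Set X := closure Hᶜ
    H = bracketSel f Fᶜ (isOpen_compl_iff.mpr isClosed_closure) ∧
    (∀ W : Set X, IsOpen W → H ⊆ W → ∃ i, V i ⊆ W) ∧
    ∃ hF : F.Nonempty, ClopenModulo H (f ⟨F, hF, isClosed_closure⟩) ∧
      ClopenModulo F (f ⟨F, hF, isClosed_closure⟩) := by
  intro H F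
  have hH : IsClosed (⋂ i, V i) :=
    iInter_closure_eq_of_ssubset_angleSel hVo hstrict ▸ isClosed_iInter fun _ => isClosed_closure
  obtain ⟨w, -, hw⟩ := exists_mem_angleSel_notMem_iInter hVo hstrict (Classical.arbitrary ι)
  have hne : F.Nonempty := ⟨w, subset_closure hw⟩
  have hfix : ∀ x ∈ H, f (unionSingleton F isClosed_closure x) = x := fun _ hx =>
    hf.apply_unionSingleton_eq_of_mem_iInter hVo hV
      (fun i => (hstrict i).imp fun _ hj => subset_closure.trans hj.subset) hx
  have hpH := hf.apply_closure_compl_iInter_mem_iInter hVo hV hstrict hne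
  exact ⟨eq_bracketSel_compl_closure_compl hne hfix hpH,
    fun _ => hf.exists_subset_of_iInter_subset hVo hV hstrict, hne,
    hH.clopenModulo_of_frontier_eq_singleton
      (frontier_eq_singleton_of_selection hf hH hne hfix hpH)⟩

end ShrinkingNet

/-- For a limit ordinal `λ` and open sets `U α`, `α < λ`, with
`cl (U (α+1)) ⊊ ⟨U α⟩_f ⊆ U β` for all `β ≤ α < λ`: putting `H = ⋂_{α<λ} U α` and
`F = cl (Hᶜ)`, we have `H = [Fᶜ]_f`, the family `{U α : α < λ}` is a local base at `H`,
and both `H` and `F` are clopen modulo the point `f(F)`. -/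
theorem stmt_13 {X : Type u} [TopologicalSpace X] [T2Space X]
    (lam : Ordinal.{v}) (hlam : Order.IsSuccLimit lam)
    (f : NEClosed X → X) (hf : IsVSelection f)
    (U : Ordinal.{v} → Set X) (hUo : ∀ α, α < lam → IsOpen (U α))
    (hch : ∀ (β α : Ordinal.{v}), β ≤ α → ∀ hα : α < lam,
      closure (U (α + 1)) ⊂ angleSel f (U α) (hUo α hα) ∧
      angleSel f (U α) (hUo α hα) ⊆ U β) :
    let H : Set X := ⋂ α ∈ Set.Iio lam, U α
    let F : Set X := closure Hᶜ
    H = bracketSel f Fᶜ (isOpen_compl_iff.mpr isClosed_closure) ∧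
    (∀ V : Set X, IsOpen V → H ⊆ V → ∃ α < lam, U α ⊆ V) ∧
    ∃ hF : F.Nonempty, ClopenModulo H (f ⟨F, hF, isClosed_closure⟩) ∧
      ClopenModulo F (f ⟨F, hF, isClosed_closure⟩) := by
  have hsucc : ∀ α : Iio lam, (α : Ordinal) + 1 < lam := fun α => by
    rw [← Order.succ_eq_add_one]; exact hlam.succ_lt α.2
  have hsub : ∀ β α, β ≤ α → ∀ hα : α < lam, U (α + 1) ⊆ U β := fun β α hβα hα =>
    subset_closure.trans ((hch β α hβα hα).1.subset.trans (hch β α hβα hα).2)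
  have : Nonempty (Iio lam) := ⟨⟨0, hlam.pos⟩⟩
  set V : Iio lam → Set X := fun α => U (α + 1)
  have hVo : ∀ α, IsOpen (V α) := fun α => hUo _ (hsucc α)
  have hV : Antitone V := fun α β hαβ => by
    rcases hαβ.lt_or_eq with h | rfl
    · exact hsub _ _ (Order.add_one_le_of_lt h) β.2
    · exact le_rfl
  have hstrict : ∀ α, ∃ β, closure (V β) ⊂ angleSel f (V α) (hVo α) := fun α =>
    ⟨⟨α + 1, hsucc α⟩, (hch _ _ le_rfl (hsucc α)).1⟩
  have hHV : ⋂ α ∈ Iio lam, U α = ⋂ α, V α :=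
    Subset.antisymm (fun x hx => mem_iInter.mpr fun α => mem_iInter₂.mp hx _ (hsucc α))
      (fun x hx => mem_iInter₂.mpr fun α hα => hsub α α le_rfl hα (mem_iInter.mp hx ⟨α, hα⟩))
  obtain ⟨hbr, hbase, hclopen⟩ := hf.iInter_eq_bracketSel_and_clopenModulo hVo hV hstrict
  rw [hHV]
  refine ⟨hbr, fun W hW hHW => ?_, hclopen⟩
  obtain ⟨α, hα⟩ := hbase W hW hHW
  exact ⟨α + 1, hsucc α, hα⟩
end

section
/- Let f : X → Y be a continuous closed surjective map, where X is a Tychonoff space and Y is a compact Hausdorff space, and let βf : βX → Y be the unique continuous extension of f to the Čech–Stone compactification βX of X. Then (βf)⁻¹(y) equals the closure in βX of f⁻¹(y), for every y ∈ Y. -/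
open Set Topology Filter

universe u v

/-- If `f : X → Y` is a continuous closed surjection from a Tychonoff space onto a compact
Hausdorff space, then the fibers of the Čech–Stone extension `βf : βX → Y` are the closures
in `βX` of the corresponding fibers of `f`. -/
theorem stmt_17 {X : Type u} [TopologicalSpace X] [T35Space X]
    {Y : Type v} [TopologicalSpace Y] [CompactSpace Y] [T2Space Y]
    (f : X → Y) (hfc : Continuous f) (hfcl : IsClosedMap f) (hfs : Function.Surjective f) :
    ∀ y : Y, stoneCechExtend hfc ⁻¹' {y} = closure (stoneCechUnit '' (f ⁻¹' {y})) := by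
  intro y
  set S := stoneCechUnit '' (f ⁻¹' {y}) with hS
  apply subset_antisymm
  · -- hard direction
    intro z hz
    simp only [mem_preimage, mem_singleton_iff] at hz
    by_contra hzc
    obtain ⟨t, htz, htc, hts⟩ := exists_mem_nhds_isClosed_subset
      ((isClosed_closure (s := S)).isOpen_compl.mem_nhds hzc)
    have hA : IsClosed (stoneCechUnit ⁻¹' t : Set X) :=
      htc.preimage continuous_stoneCechUnit
    have hyW : y ∉ f '' (stoneCechUnit ⁻¹' t) := by
      rintro ⟨x, hxt, hxy⟩
      exact hts hxt (subset_closure ⟨x, hxy, rfl⟩)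
    have hWopen : IsOpen ((f '' (stoneCechUnit ⁻¹' t))ᶜ) :=
      (hfcl _ hA).isOpen_compl
    have hO : IsOpen (stoneCechExtend hfc ⁻¹' (f '' (stoneCechUnit ⁻¹' t))ᶜ ∩ interior t) :=
      (hWopen.preimage (continuous_stoneCechExtend hfc)).inter isOpen_interior
    have hzO : z ∈ stoneCechExtend hfc ⁻¹' (f '' (stoneCechUnit ⁻¹' t))ᶜ ∩ interior t :=
      ⟨by simpa [hz] using hyW, mem_interior_iff_mem_nhds.2 htz⟩
    obtain ⟨x, hxO⟩ := denseRange_stoneCechUnit.exists_mem_open hO ⟨z, hzO⟩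
    exact hxO.1 ⟨x, show stoneCechUnit x ∈ t from interior_subset hxO.2,
      (congrFun (stoneCechExtend_extends hfc) x).symm⟩
  · refine closure_minimal ?_ (isClosed_singleton.preimage (continuous_stoneCechExtend hfc))
    rintro _ ⟨x, hx, rfl⟩
    exact (congrFun (stoneCechExtend_extends hfc) x).trans hx
end

section
/- Let X be a zero-dimensional (i.e. having a base of clopen sets) normal Hausdorff space and let H ∈ Δ_ω(X). Then the closure of H in the Čech–Stone compactification βX belongs to Δ_ω(βX). -/
open Set Topology Filter

universe u v

/-!
For a clopen neighbourhood `E` of `q` in `X`, the set `H \ E` is clopen in `X`, so its closure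
in `βX` is clopen and misses `q`; hence the closure of `E ∩ H` is a neighbourhood of `q` in
`cl H`. Since `βX` is regular, these closures shrink to `q` as `E` shrinks, so a countable clopen
base at `q` in `H` gives a countable base at `q` in `cl H`, and every other point of `cl H` lies
in one of the open sets `cl (H \ E) ⊆ cl H \ {q}`.
-/

section StoneCechClopen

variable {X : Type u} [TopologicalSpace X] {K : Set X}

lemma closure_image_stoneCechUnit_eq_preimage (hK : IsClopen K) :
    closure (stoneCechUnit '' K) =
      stoneCechExtend ((continuous_boolIndicator_iff_isClopen K).2 hK) ⁻¹' {true} := by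
  set F := stoneCechExtend ((continuous_boolIndicator_iff_isClopen K).2 hK)
  have hF : Continuous F := continuous_stoneCechExtend _
  have hFK : stoneCechUnit ⁻¹' (F ⁻¹' {true}) = K := by
    rw [← preimage_comp, stoneCechExtend_extends, preimage_boolIndicator_true]
  apply subset_antisymm
  · refine closure_minimal ?_ (isClosed_singleton.preimage hF)
    rw [image_subset_iff, hFK]
  · calc F ⁻¹' {true}
        ⊆ closure (F ⁻¹' {true} ∩ range stoneCechUnit) :=
          denseRange_stoneCechUnit.open_subset_closure_inter
            ((isOpen_discrete _).preimage hF)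
      _ = closure (stoneCechUnit '' K) := by
          rw [← image_preimage_eq_inter_range, hFK]

lemma IsClopen.closure_image_stoneCechUnit (hK : IsClopen K) :
    IsClopen (closure (stoneCechUnit '' K)) := by
  rw [closure_image_stoneCechUnit_eq_preimage hK]
  exact (isClopen_discrete _).preimage (continuous_stoneCechExtend _)

lemma stoneCechUnit_notMem_closure_image (hK : IsClopen K) {x : X} (hx : x ∉ K) :
    stoneCechUnit x ∉ closure (stoneCechUnit '' K) := by
  rw [closure_image_stoneCechUnit_eq_preimage hK, mem_preimage, stoneCechExtend_stoneCechUnit,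
    mem_singleton_iff, ← mem_iff_boolIndicator]
  exact hx

end StoneCechClopen

lemma IsClopen.clopenModulo {Y : Type u} [TopologicalSpace Y] [T1Space Y] {S : Set Y} {p : Y}
    (hS : IsClopen S) (hp : p ∈ S) : ClopenModulo S p :=
  ⟨⟨p, hp⟩, hS.isClosed, hp, hS.isOpen.sdiff isClosed_singleton⟩

lemma ClopenModulo.isClopen_diff {X : Type u} [TopologicalSpace X] {H E : Set X} {q : X}
    (hH : ClopenModulo H q) (hE : IsClopen E) (hqE : q ∈ E) : IsClopen (H \ E) := by
  refine ⟨hH.2.1.sdiff hE.isOpen, ?_⟩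
  have : H \ E = (H \ {q}) \ E := by
    rw [sdiff_sdiff, singleton_union, insert_eq_of_mem hqE]
  rw [this]
  exact hH.2.2.2.sdiff hE.isClosed

lemma hasBasis_nhds_isClopen {X : Type u} [TopologicalSpace X]
    (hzd : ∀ (x : X) (V : Set X), IsOpen V → x ∈ V → ∃ U : Set X, IsClopen U ∧ x ∈ U ∧ U ⊆ V)
    (x : X) : (𝓝 x).HasBasis (fun U => IsClopen U ∧ x ∈ U) id :=
  (nhds_basis_opens x).to_hasBasis
    (fun V ⟨hxV, hV⟩ => let ⟨U, hU, hxU, hUV⟩ := hzd x V hV hxV; ⟨U, ⟨hU, hxU⟩, hUV⟩)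
    (fun U ⟨hU, hxU⟩ => ⟨U, ⟨hxU, hU.isOpen⟩, subset_rfl⟩)

section ClopenModuloPoint

variable {X : Type u} [TopologicalSpace X] {H : Set X} {q : X}

lemma closure_image_stoneCechUnit_inter_mem_nhdsWithin (hH : ClopenModulo H q) {E : Set X}
    (hE : IsClopen E) (hqE : q ∈ E) :
    closure (stoneCechUnit '' (E ∩ H)) ∈
      𝓝[closure (stoneCechUnit '' H)] (stoneCechUnit q) := by
  have hK := hH.isClopen_diff hE hqE
  refine mem_nhdsWithin.2 ⟨(closure (stoneCechUnit '' (H \ E)))ᶜ,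
    hK.closure_image_stoneCechUnit.isClosed.isOpen_compl,
    stoneCechUnit_notMem_closure_image hK fun h => h.2 hqE, ?_⟩
  rintro z ⟨hzK, hzH⟩
  rw [← inter_union_sdiff H E, image_union, closure_union, inter_comm] at hzH
  exact hzH.resolve_right hzK

variable {ι : Sort*} {p : ι → Prop} {E : ι → Set X}

lemma hasBasis_nhdsWithin_closure_image_stoneCechUnit (hH : ClopenModulo H q)
    (hE : ∀ i, p i → IsClopen (E i) ∧ q ∈ E i) (hb : (𝓝[H] q).HasBasis p (fun i => E i ∩ H)) :
    (𝓝[closure (stoneCechUnit '' H)] (stoneCechUnit q)).HasBasis p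
      (fun i => closure (stoneCechUnit '' (E i ∩ H))) := by
  refine ⟨fun t => ⟨fun ht => ?_, fun ⟨i, hi, hit⟩ => ?_⟩⟩
  · obtain ⟨u, hu, hut⟩ := mem_nhdsWithin_iff_exists_mem_nhds_inter.1 ht
    obtain ⟨W, hW, hWc, hWu⟩ := exists_mem_nhds_isClosed_subset hu
    obtain ⟨i, hi, hiW⟩ := hb.mem_iff.1
      (mem_nhdsWithin_of_mem_nhds (continuous_stoneCechUnit.continuousAt hW))
    refine ⟨i, hi, fun z hz => hut ⟨hWu ?_, closure_mono (image_mono inter_subset_right) hz⟩⟩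
    exact closure_minimal (image_subset_iff.2 hiW) hWc hz
  · exact mem_of_superset
      (closure_image_stoneCechUnit_inter_mem_nhdsWithin hH (hE i hi).1 (hE i hi).2) hit

lemma isOpen_closure_image_stoneCechUnit_diff_singleton (hH : ClopenModulo H q)
    (hE : ∀ i, p i → IsClopen (E i) ∧ q ∈ E i) (hb : (𝓝[H] q).HasBasis p (fun i => E i ∩ H)) :
    IsOpen (closure (stoneCechUnit '' H) \ {stoneCechUnit q}) := by
  refine isOpen_iff_mem_nhds.2 fun z ⟨hzH, hzq⟩ => ?_
  obtain ⟨i, hi, hiz⟩ := (hasBasis_nhdsWithin_closure_image_stoneCechUnit hH hE hb).mem_iff.1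
    (mem_nhdsWithin_of_mem_nhds (isOpen_compl_singleton.mem_nhds (Ne.symm hzq)))
  have hK := hH.isClopen_diff (hE i hi).1 (hE i hi).2
  have hzK : z ∈ closure (stoneCechUnit '' (H \ E i)) := by
    rw [← inter_union_sdiff H (E i), image_union, closure_union, inter_comm] at hzH
    exact hzH.resolve_left fun h => hiz h rfl
  refine mem_of_superset (hK.closure_image_stoneCechUnit.isOpen.mem_nhds hzK) fun w hw => ?_
  refine ⟨closure_mono (image_mono sdiff_subset) hw, ?_⟩
  rintro rfl
  exact stoneCechUnit_notMem_closure_image hK (fun h => h.2 (hE i hi).2) hw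

end ClopenModuloPoint

theorem stmt_18_general {X : Type u} [TopologicalSpace X]
    (hzd : ∀ (x : X) (V : Set X), IsOpen V → x ∈ V → ∃ U : Set X, IsClopen U ∧ x ∈ U ∧ U ⊆ V)
    (H : Set X) (hH : H ∈ DeltaOmegaSet X) :
    closure (stoneCechUnit '' H) ∈ DeltaOmegaSet (StoneCech X) := by
  obtain ⟨⟨p, hp⟩, hclopen | ⟨q, hq, hqH, hcount⟩⟩ := hH
  · have hS := hclopen.closure_image_stoneCechUnit
    exact ⟨⟨_, hS.clopenModulo (subset_closure (mem_image_of_mem _ hp.2.2.1))⟩, Or.inl hS⟩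
  · have : (𝓝[H] q).IsCountablyGenerated := by
      rw [← map_nhds_subtype_val ⟨q, hq⟩]
      infer_instance
    have hB : (𝓝[H] q).HasBasis (fun U => IsClopen U ∧ q ∈ U) (· ∩ H) :=
      (hasBasis_nhds_isClopen hzd q).inf_principal H
    obtain ⟨E, hE, hEb⟩ := hB.exists_antitone_subbasis
    have hb := hEb.toHasBasis
    have hqS : stoneCechUnit q ∈ closure (stoneCechUnit '' H) :=
      subset_closure (mem_image_of_mem _ hq)
    have hS : ClopenModulo (closure (stoneCechUnit '' H)) (stoneCechUnit q) :=
      ⟨⟨_, hqS⟩, isClosed_closure, hqS,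
        isOpen_closure_image_stoneCechUnit_diff_singleton hqH (fun n _ => hE n) hb⟩
    refine ⟨⟨_, hS⟩, Or.inr ⟨_, hqS, hS, ?_⟩⟩
    have := (hasBasis_nhdsWithin_closure_image_stoneCechUnit hqH (fun n _ => hE n)
      hb).isCountablyGenerated
    rw [nhds_subtype_eq_comap_nhdsWithin]
    infer_instance

/-- If `X` is a zero-dimensional normal Hausdorff space and `H ∈ Δ_ω(X)`, then the closure of
(the image of) `H` in the Čech–Stone compactification `βX` belongs to `Δ_ω(βX)`. -/
theorem stmt_18 {X : Type u} [TopologicalSpace X] [T2Space X] [NormalSpace X]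
    (hzd : ∀ (x : X) (V : Set X), IsOpen V → x ∈ V → ∃ U : Set X, IsClopen U ∧ x ∈ U ∧ U ⊆ V)
    (H : Set X) (hH : H ∈ DeltaOmegaSet X) :
    closure (stoneCechUnit '' H) ∈ DeltaOmegaSet (StoneCech X) :=
  stmt_18_general hzd H hH
end
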